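/- Let X be a countable Fréchet topological space without isolated points. Then the ideal nwd(X) of nowhere dense subsets of X is tame. -/

import Mathlib

open Set Filter Topology TopologicalSpace

/-- A set `C` is an (infinite) sequence converging to `p`: it is infinite and
almost contained in every neighborhood of `p`. -/
def IsConvSeqTo {X : Type*} [TopologicalSpace X] (C : Set X) (p : X) : Prop :=
  C.Infinite ∧ ∀ U ∈ nhds p, (C \ U).Finite

/-- A space is non-discrete if some point is not isolated. -/
def NonDiscrete (X : Type*) [TopologicalSpace X] : Prop :=
  ∃ x : X, ¬ IsOpen ({x} : Set X)

/-- An ideal of subsets: closed under subsets and finite unions, and containing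
all finite sets. -/
def IsIdeal {α : Type*} (I : Set (Set α)) : Prop :=
  (∀ A B : Set α, A ⊆ B → B ∈ I → A ∈ I) ∧
  (∀ A ∈ I, ∀ B ∈ I, A ∪ B ∈ I) ∧
  (∀ A : Set α, A.Finite → A ∈ I)

/-- A family `I` is ω-hitting if for every countable family of infinite sets
there is a member of `I` meeting each of them in an infinite set. -/
def OmegaHitting {α : Type*} (I : Set (Set α)) : Prop :=
  ∀ Y : ℕ → Set α, (∀ n, (Y n).Infinite) → ∃ A ∈ I, ∀ n, (Y n ∩ A).Infinite

/-- An ideal `I` on `α` is tame if for every `I`-positive set `Y`, every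
`f : Y → ω` and every ω-hitting ideal `J` on `ω` there is `j ∈ J` whose
`f`-preimage (inside `Y`) is `I`-positive. -/
def Tame {α : Type*} (I : Set (Set α)) : Prop :=
  ∀ Y : Set α, Y ∉ I → ∀ f : α → ℕ, ∀ J : Set (Set ℕ),
    IsIdeal J → OmegaHitting J → ∃ j ∈ J, Y ∩ f ⁻¹' j ∉ I

/-- `Y` is entangled if for every point `x`, the ideal
`I_x ↾ Y = {A ⊆ Y : x ∉ closure A}` is ω-hitting (on `Y`). -/
def Entangled {X : Type*} [TopologicalSpace X] (Y : Set X) : Prop :=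
  ∀ x : X, ∀ Z : ℕ → Set X, (∀ n, Z n ⊆ Y ∧ (Z n).Infinite) →
    ∃ A : Set X, A ⊆ Y ∧ x ∉ closure A ∧ ∀ n, (Z n ∩ A).Infinite

/-- A space is groomed if it contains no dense entangled subset. -/
def Groomed (X : Type*) [TopologicalSpace X] : Prop :=
  ¬ ∃ D : Set X, Dense D ∧ Entangled D

/-- An ideal on a group is invariant if it is closed under left and right
translations and under inversion. -/
def InvariantIdeal {G : Type*} [Group G] (I : Set (Set G)) : Prop :=
  ∀ A ∈ I, ∀ g : G,
    (fun h => g * h) '' A ∈ I ∧ (fun h => h * g) '' A ∈ I ∧ (fun h => h⁻¹) '' A ∈ I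

/-- An ideal on a topological group is weakly closed if for every set `A` and
every sequence `C` converging to the identity,
`A ∈ I ↔ A ∪ {x : C·x ⊆* A} ∈ I`. -/
def WeaklyClosed {G : Type*} [Group G] [TopologicalSpace G] (I : Set (Set G)) : Prop :=
  ∀ A C : Set G, IsConvSeqTo C 1 →
    (A ∈ I ↔ A ∪ {x : G | ((fun c => c * x) '' C \ A).Finite} ∈ I)

/-- Alternative (1) of IIA: a countable subfamily of `I` capturing (meeting
infinitely) every infinite convergent sequence. -/
def CapturesConvSeqs {G : Type*} [TopologicalSpace G] (I : Set (Set G)) : Prop :=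
  ∃ S : Set (Set G), S.Countable ∧ S ⊆ I ∧
    ∀ C : Set G, ∀ p : G, IsConvSeqTo C p → ∃ A ∈ S, (C ∩ A).Infinite

/-- Alternative (2) of IIA: a countable family of `I`-positive sets which is an
almost π-network: every non-empty open set contains one of them modulo `I`. -/
def HasAlmostPiNetwork {G : Type*} [TopologicalSpace G] (I : Set (Set G)) : Prop :=
  ∃ H : Set (Set G), H.Countable ∧ (∀ A ∈ H, A ∉ I) ∧
    ∀ U : Set G, IsOpen U → U.Nonempty → ∃ A ∈ H, A \ U ∈ I

/-- The Invariant Ideal Axiom: for every countable groomed topological group `G`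
and every tame, weakly closed, invariant ideal on `G`, one of the two
alternatives holds. -/
def IIA : Prop :=
  ∀ (G : Type) [Group G] [TopologicalSpace G] [IsTopologicalGroup G] [T1Space G]
    [Countable G], Groomed G →
    ∀ I : Set (Set G), IsIdeal I → Tame I → WeaklyClosed I → InvariantIdeal I →
      CapturesConvSeqs I ∨ HasAlmostPiNetwork I

/-- A set is scattered if every nonempty subset has a point isolated in it. -/
def IsScattered {X : Type*} [TopologicalSpace X] (A : Set X) : Prop :=
  ∀ B ⊆ A, B.Nonempty → ∃ x ∈ B, ∃ U : Set X, IsOpen U ∧ U ∩ B = {x}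

/-- A set is closed discrete if it is closed and discrete as a subspace. -/
def IsClosedDiscrete {X : Type*} [TopologicalSpace X] (D : Set X) : Prop :=
  IsClosed D ∧ ∀ x ∈ D, ∃ U : Set X, IsOpen U ∧ U ∩ D = {x}

/-- The ideal of nowhere dense subsets of `X`. -/
def nwdIdeal (X : Type*) [TopologicalSpace X] : Set (Set X) :=
  {A | IsNowhereDense A}

/-- The ideal generated by the compact subsets of `X`. -/
def cptIdeal (X : Type*) [TopologicalSpace X] : Set (Set X) :=
  {A | ∃ F : Set (Set X), F.Finite ∧ (∀ K ∈ F, IsCompact K) ∧ A ⊆ ⋃₀ F}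

/-- The ideal generated by the closed scattered subsets of `X`. -/
def csctIdeal (X : Type*) [TopologicalSpace X] : Set (Set X) :=
  {A | ∃ F : Set (Set X), F.Finite ∧ (∀ K ∈ F, IsClosed K ∧ IsScattered K) ∧ A ⊆ ⋃₀ F}

/-- A set is countably compact: every countable open cover has a finite subcover. -/
def IsCountablyCompactNat {X : Type*} [TopologicalSpace X] (K : Set X) : Prop :=
  ∀ U : ℕ → Set X, (∀ n, IsOpen (U n)) → K ⊆ ⋃ n, U n →
    ∃ t : Finset ℕ, K ⊆ ⋃ n ∈ t, U n

/-- A `kω`-space: the topology is determined by a countable family of compact sets. -/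
def IsKOmega (X : Type*) [TopologicalSpace X] : Prop :=
  ∃ K : ℕ → Set X, (∀ n, IsCompact (K n)) ∧
    ∀ U : Set X, IsOpen U ↔ ∀ n, ∃ V : Set X, IsOpen V ∧ U ∩ K n = V ∩ K n

/-- A `cω`-space: the topology is determined by a countable family of countably
compact sets. -/
def IsCOmega (X : Type*) [TopologicalSpace X] : Prop :=
  ∃ K : ℕ → Set X, (∀ n, IsCountablyCompactNat (K n)) ∧
    ∀ U : Set X, IsOpen U ↔ ∀ n, ∃ V : Set X, IsOpen V ∧ U ∩ K n = V ∩ K n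

/-- A set is dense in itself if it has no points isolated in its subspace topology. -/
def DenseInItself {X : Type*} [TopologicalSpace X] (A : Set X) : Prop :=
  ∀ x ∈ A, x ∈ closure (A \ {x})

/-- A strict vD-network at `x`: a countable family of infinite closed discrete
sets, almost contained in every open neighborhood of `x` member-wise. -/
def StrictVDNetwork {X : Type*} [TopologicalSpace X] (D : Set (Set X)) (x : X) : Prop :=
  D.Countable ∧ (∀ E ∈ D, E.Infinite ∧ IsClosedDiscrete E) ∧
    ∀ U : Set X, IsOpen U → x ∈ U → ∃ E ∈ D, (E \ U).Finite

/-- A relation `R ⊆ G × G` is large if for all `a b`, `(a,b) ∈ R` or `(a, a·b⁻¹) ∈ R`. -/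
def IsLargeRel {G : Type*} [Group G] (R : Set (G × G)) : Prop :=
  ∀ a b : G, (a, b) ∈ R ∨ (a, a * b⁻¹) ∈ R

/-- `R⁻¹[B] = {a : (a,b) ∈ R for some b ∈ B}`. -/
def relPreimage {G : Type*} (R : Set (G × G)) (B : Set G) : Set G :=
  {a | ∃ b ∈ B, (a, b) ∈ R}

/-!
Let `Y` be somewhere dense and `f : X → ℕ`. If some finite set of values has a somewhere dense
preimage in `Y`, it lies in `J` and we are done. Otherwise take `x ∈ interior (closure Y)`. Either
infinitely many fibres `Y ∩ f⁻¹{k}` accumulate at `x`, or, after removing the finitely many that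
do, a sequence in `Y` converging to `x` has finite fibres under `f`, so its set of `f`-values `K_x`
is infinite and every `j` meeting `K_x` infinitely puts `x` into `closure (Y ∩ f⁻¹ j)`. Since `X`
is countable, an ω-hitting `J` contains a `j` meeting every `K_x`, and then `Y ∩ f⁻¹ j` is dense
in `interior (closure Y)`.
-/

section

variable {X : Type*} [TopologicalSpace X]

lemma subset_closure_diff_of_isNowhereDense {U D N : Set X} (hU : IsOpen U)
    (hD : U ⊆ closure D) (hN : IsNowhereDense N) : U ⊆ closure (D \ N) := by
  have hdense : Dense (closure N)ᶜ := interior_eq_empty_iff_dense_compl.1 hN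
  have hV : U ∩ (closure N)ᶜ ⊆ closure (D \ N) := by
    refine ((subset_inter Subset.rfl (inter_subset_left.trans hD)).trans
      (hU.inter isClosed_closure.isOpen_compl).inter_closure).trans (closure_mono ?_)
    rintro y ⟨⟨-, hyN⟩, hyD⟩
    exact ⟨hyD, fun h => hyN (subset_closure h)⟩
  exact (hdense.open_subset_closure_inter hU).trans (closure_minimal hV isClosed_closure)

lemma not_isNowhereDense_of_subset_closure {U s : Set X} (hU : IsOpen U) (hne : U.Nonempty)
    (h : U ⊆ closure s) : ¬ IsNowhereDense s := fun hs =>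
  hne.ne_empty (subset_empty_iff.1 (hs ▸ interior_maximal h hU))

lemma exists_infinite_forall_mem_closure_of_tendsto {β : Type*} {Y : Set X} {f : X → β}
    {u : ℕ → X} {x : X} (hu : ∀ n, u n ∈ Y) (hlim : Tendsto u atTop (𝓝 x))
    (hfib : ∀ k, {n | f (u n) = k}.Finite) :
    ∃ K : Set β, K.Infinite ∧ ∀ j, (K ∩ j).Infinite → x ∈ closure (Y ∩ f ⁻¹' j) := by
  refine ⟨range (f ∘ u), fun hfin => infinite_univ (α := ℕ) ?_, fun j hj => ?_⟩
  · exact preimage_range (f ∘ u) ▸ hfin.preimage' fun k _ => hfib k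
  · rw [inter_comm, ← image_preimage_eq_inter_range] at hj
    have hfreq : ∃ᶠ n in atTop, u n ∈ Y ∩ f ⁻¹' j :=
      (Nat.frequently_atTop_iff_infinite.2 hj.of_image).mono fun n hn => ⟨hu n, hn⟩
    exact mem_closure_of_frequently_of_tendsto hfreq hlim

lemma exists_infinite_forall_mem_closure_preimage [FrechetUrysohnSpace X] {β : Type*}
    {Y : Set X} {f : X → β} (hfib : ∀ F : Set β, F.Finite → IsNowhereDense (Y ∩ f ⁻¹' F))
    {x : X} (hx : x ∈ interior (closure Y)) :
    ∃ K : Set β, K.Infinite ∧ ∀ j, (K ∩ j).Infinite → x ∈ closure (Y ∩ f ⁻¹' j) := by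
  set K₁ := {k | x ∈ closure (Y ∩ f ⁻¹' {k})}
  by_cases hK₁ : K₁.Infinite
  · refine ⟨K₁, hK₁, fun j hj => ?_⟩
    obtain ⟨k, hk, hkj⟩ := hj.nonempty
    exact closure_mono (inter_subset_inter_right _ (preimage_mono (singleton_subset_iff.2 hkj))) hk
  have hx' : x ∈ closure (Y \ (Y ∩ f ⁻¹' K₁)) :=
    subset_closure_diff_of_isNowhereDense isOpen_interior interior_subset
      (hfib K₁ (not_infinite.1 hK₁)) hx
  obtain ⟨u, hu, hlim⟩ := mem_closure_iff_seq_limit.1 hx'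
  refine exists_infinite_forall_mem_closure_of_tendsto (fun n => (hu n).1) hlim fun k => ?_
  by_contra hinf
  have hk : k ∈ K₁ := mem_closure_of_frequently_of_tendsto
    ((Nat.frequently_atTop_iff_infinite.2 hinf).mono fun n hn => ⟨(hu n).1, hn⟩) hlim
  obtain ⟨n, hn⟩ := (Set.not_finite.1 hinf).nonempty
  exact (hu n).2 ⟨(hu n).1, show f (u n) ∈ K₁ from (hn : f (u n) = k) ▸ hk⟩

end

lemma OmegaHitting.exists_forall_infinite_inter {α ι : Type*} [Countable ι] [Nonempty ι]
    {J : Set (Set α)} (hJ : OmegaHitting J) (K : ι → Set α) (hK : ∀ i, (K i).Infinite) :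
    ∃ j ∈ J, ∀ i, (K i ∩ j).Infinite := by
  obtain ⟨g, hg⟩ := exists_surjective_nat ι
  obtain ⟨j, hj, hgj⟩ := hJ (K ∘ g) fun n => hK (g n)
  exact ⟨j, hj, hg.forall.2 hgj⟩

theorem statement2_general (X : Type*) [TopologicalSpace X] [Countable X]
    [FrechetUrysohnSpace X] :
    Tame (nwdIdeal X) := by
  intro Y hY f J hJ hJhit
  by_cases hF : ∃ F : Set ℕ, F.Finite ∧ Y ∩ f ⁻¹' F ∉ nwdIdeal X
  · obtain ⟨F, hFfin, hFpos⟩ := hF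
    exact ⟨F, hJ.2.2 F hFfin, hFpos⟩
  push Not at hF
  set U := interior (closure Y)
  have hU : U.Nonempty := nonempty_iff_ne_empty.2 hY
  have := hU.to_subtype
  choose K hKinf hK using fun x : U => exists_infinite_forall_mem_closure_preimage hF x.2
  obtain ⟨j, hjJ, hj⟩ := hJhit.exists_forall_infinite_inter K hKinf
  refine ⟨j, hjJ, not_isNowhereDense_of_subset_closure isOpen_interior hU fun x hx => ?_⟩
  exact hK ⟨x, hx⟩ j (hj ⟨x, hx⟩)

/-- In a countable Fréchet space without isolated points, the
ideal of nowhere dense sets is tame. -/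
theorem statement2 (X : Type*) [TopologicalSpace X] [T1Space X] [Countable X]
    [FrechetUrysohnSpace X] (hiso : ∀ x : X, ¬ IsOpen ({x} : Set X)) :
    Tame (nwdIdeal X) :=
  statement2_general X
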